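/- Birthday bound for Pollard-ρ: for a uniformly random function φ on a set of size n, the expected number of elements in the orbit of a fixed starting point x (equivalently, the expected value of tail length plus cycle length) is at most 2√n + 1. In particular it is O(√n). -/

import Mathlib

/-!
Write `ρ φ` for the size of the orbit of `x`. Then `m < ρ φ` exactly when
`x, φ x, …, φ^[m] x` are distinct, so `E ρ = ∑_{m < n} P(ρ > m)`. Given `ρ > m`, the point
`φ^[m+1] x` is uniform and independent of the first `m + 1` iterates, so it is new with
probability `1 - (m+1)/n`, whence `P(ρ > m) = ∏_{t=1}^{m} (1 - t/n)`. Splitting the sum at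
`k = ⌈√n⌉`, the first `k` terms are at most `1` and the others are dominated by a geometric
series of ratio `1 - k/n`, with sum `n/k ≤ √n`.
-/

open Finset

namespace Function

variable {α : Type*} {f : α → α} {x : α}

noncomputable def orbitSize (f : α → α) (x : α) : ℕ := (Set.range (f^[·] x)).ncard

theorem range_iterate_subset_image_Iio {i j : ℕ} (hij : i < j) (h : f^[j] x = f^[i] x) :
    Set.range (f^[·] x) ⊆ (f^[·] x) '' Set.Iio j := by
  rintro _ ⟨k, rfl⟩
  induction k with
  | zero => exact ⟨0, by simp only [Set.mem_Iio]; omega, rfl⟩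
  | succ k ih =>
    obtain ⟨l, hl, hk⟩ := ih
    rcases (Nat.succ_le_of_lt (Set.mem_Iio.mp hl)).lt_or_eq with hl' | rfl
    · exact ⟨l + 1, hl', by simp only [iterate_succ_apply', hk]⟩
    · exact ⟨i, hij, by simp only [← h, iterate_succ_apply', hk]⟩

theorem orbitSize_le_of_iterate_eq {i j : ℕ} (hij : i < j) (h : f^[j] x = f^[i] x) :
    orbitSize f x ≤ j :=
  calc orbitSize f x ≤ ((f^[·] x) '' Set.Iio j).ncard :=
        Set.ncard_le_ncard (range_iterate_subset_image_Iio hij h) ((Set.finite_Iio j).image _)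
    _ ≤ j := (Set.ncard_image_le (Set.finite_Iio j)).trans (Set.ncard_Iio_nat j).le

theorem lt_orbitSize_iff [Finite α] {m : ℕ} :
    m < orbitSize f x ↔ Set.InjOn (f^[·] x) (Set.Iic m) := by
  constructor
  · intro hm i hi j hj hij
    by_contra hne
    rcases Nat.lt_or_gt_of_ne hne with h | h
    · exact (orbitSize_le_of_iterate_eq h hij.symm).not_gt (hm.trans_le' hj)
    · exact (orbitSize_le_of_iterate_eq h hij).not_gt (hm.trans_le' hi)
  · intro hinj
    calc m < ((f^[·] x) '' Set.Iic m).ncard := by rw [hinj.ncard_image, Set.ncard_Iic_nat]; omega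
      _ ≤ orbitSize f x := Set.ncard_le_ncard (Set.image_subset_range _ _)

theorem orbitSize_pos [Finite α] : 0 < orbitSize f x :=
  (Set.ncard_pos (Set.toFinite _)).mpr ⟨x, 0, rfl⟩

theorem orbitSize_le_card [Fintype α] : orbitSize f x ≤ Fintype.card α :=
  (Set.ncard_le_card _).trans_eq Nat.card_eq_fintype_card

theorem injOn_iterate_Iic_succ_iff {m : ℕ} :
    Set.InjOn (f^[·] x) (Set.Iic (m + 1)) ↔
      Set.InjOn (f^[·] x) (Set.Iic m) ∧ f^[m + 1] x ∉ (f^[·] x) '' Set.Iic m := by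
  rw [← Order.succ_eq_add_one, Order.Iic_succ, Set.injOn_insert (by simp)]

theorem card_compl_image_iterate_Iic [Fintype α] {m : ℕ}
    (h : Set.InjOn (f^[·] x) (Set.Iic m)) [DecidablePred (· ∈ (f^[·] x) '' Set.Iic m)] :
    #{y | y ∉ (f^[·] x) '' Set.Iic m} = Fintype.card α - (m + 1) := by
  rw [← Set.ncard_coe_finset, coe_filter_univ, ← Set.compl_def, Set.ncard_compl,
    Nat.card_eq_fintype_card, h.ncard_image, Set.ncard_Iic_nat]

theorem iterate_update_of_forall_ne [DecidableEq α] {p : α} {m : ℕ}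
    (h : ∀ i < m, f^[i] x ≠ p) (y : α) : (update f p y)^[m] x = f^[m] x := by
  induction m with
  | zero => rfl
  | succ m ih =>
    rw [iterate_succ_apply', iterate_succ_apply', ih fun i hi => h i (by omega),
      update_of_ne (h m (by omega))]

end Function

open Function

section Rewire

variable {X : Type*} [DecidableEq X] (x : X)

/-- While `x, …, φ^[m] x` are distinct, this is an involution exchanging the conditions
"`φ^[m+1] x` is a new point" and "`y` is a new point". -/
def rewire (m : ℕ) (q : (X → X) × X) : (X → X) × X :=
  (update q.1 (q.1^[m] x) q.2, q.1^[m + 1] x)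

variable {x} {m : ℕ} {φ : X → X} (y : X)

theorem iterate_rewire_fst (h : Set.InjOn (φ^[·] x) (Set.Iic m)) {i : ℕ} (hi : i ≤ m) :
    (rewire x m (φ, y)).1^[i] x = φ^[i] x :=
  iterate_update_of_forall_ne (fun j hj hjm =>
    (hj.trans_le hi).ne (h (hj.le.trans hi : j ≤ m) (le_refl m) hjm)) y

theorem eqOn_iterate_rewire_fst (h : Set.InjOn (φ^[·] x) (Set.Iic m)) :
    Set.EqOn ((rewire x m (φ, y)).1^[·] x) (φ^[·] x) (Set.Iic m) := fun _ hi =>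
  iterate_rewire_fst y h hi

theorem iterate_succ_rewire_fst (h : Set.InjOn (φ^[·] x) (Set.Iic m)) :
    (rewire x m (φ, y)).1^[m + 1] x = y := by
  rw [iterate_succ_apply', iterate_rewire_fst y h le_rfl]
  exact update_self _ _ _

theorem rewire_rewire (h : Set.InjOn (φ^[·] x) (Set.Iic m)) :
    rewire x m (rewire x m (φ, y)) = (φ, y) := by
  rw [rewire, iterate_rewire_fst y h le_rfl, iterate_succ_rewire_fst y h]
  simp [rewire, iterate_succ_apply']

end Rewire

section Counting

variable {X : Type*} [Fintype X] [DecidableEq X] (x : X)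

theorem card_lt_orbitSize_succ_mul (m : ℕ) :
    #{φ : X → X | m + 1 < orbitSize φ x} * Fintype.card X =
      #{φ : X → X | m < orbitSize φ x} * (Fintype.card X - (m + 1)) := by
  classical
  set A : Finset (X → X) := {φ | m < orbitSize φ x}
  set B : Finset (X → X) := {φ | m + 1 < orbitSize φ x}
  let t := (A ×ˢ (univ : Finset X)).filter fun q => q.2 ∉ (q.1^[·] x) '' Set.Iic m
  have hA {φ : X → X} : φ ∈ A ↔ Set.InjOn (φ^[·] x) (Set.Iic m) := by
    simp [A, lt_orbitSize_iff]
  have hB {q : (X → X) × X} : q ∈ B ×ˢ (univ : Finset X) ↔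
      Set.InjOn (q.1^[·] x) (Set.Iic m) ∧ q.1^[m + 1] x ∉ (q.1^[·] x) '' Set.Iic m := by
    simp [B, lt_orbitSize_iff, injOn_iterate_Iic_succ_iff]
  have ht {q : (X → X) × X} : q ∈ t ↔
      Set.InjOn (q.1^[·] x) (Set.Iic m) ∧ q.2 ∉ (q.1^[·] x) '' Set.Iic m := by
    simp [t, hA]
  calc #B * Fintype.card X = #(B ×ˢ (univ : Finset X)) := by rw [card_product, card_univ]
    _ = #t := by
      refine card_nbij' (rewire x m) (rewire x m) ?_ ?_ ?_ ?_
      · rintro ⟨φ, y⟩ hφ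
        obtain ⟨hinj, hnew⟩ := hB.mp hφ
        have heq := eqOn_iterate_rewire_fst y hinj
        exact ht.mpr ⟨heq.injOn_iff.mpr hinj, heq.image_eq ▸ hnew⟩
      · rintro ⟨φ, y⟩ hφ
        obtain ⟨hinj, hnew⟩ := ht.mp hφ
        have heq := eqOn_iterate_rewire_fst y hinj
        refine hB.mpr ⟨heq.injOn_iff.mpr hinj, ?_⟩
        rwa [iterate_succ_rewire_fst y hinj, heq.image_eq]
      · rintro ⟨φ, y⟩ hφ
        exact rewire_rewire y (hB.mp hφ).1
      · rintro ⟨φ, y⟩ hφ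
        exact rewire_rewire y (ht.mp hφ).1
    _ = #A * (Fintype.card X - (m + 1)) := by
      rw [card_filter, sum_product, ← smul_eq_mul, ← sum_const]
      refine sum_congr rfl fun φ hφ => ?_
      rw [← card_filter, card_compl_image_iterate_Iic (hA.mp hφ)]

theorem card_lt_orbitSize_div_card_eq_prod {m : ℕ} (hm : m ≤ Fintype.card X) :
    (#{φ : X → X | m < orbitSize φ x} : ℝ) / Fintype.card (X → X) =
      ∏ t ∈ Icc 1 m, (1 - (t : ℝ) / Fintype.card X) := by
  induction m with
  | zero =>
    simp [orbitSize_pos]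
  | succ m ih =>
    have hN : (0 : ℝ) < Fintype.card X := by exact_mod_cast Fintype.card_pos_iff.mpr ⟨x⟩
    have hrec := congrArg (Nat.cast : ℕ → ℝ) (card_lt_orbitSize_succ_mul x m)
    push_cast [Nat.cast_sub hm] at hrec
    rw [prod_Icc_succ_top (by omega), ← ih (by omega)]
    field_simp
    push_cast
    linear_combination hrec

theorem sum_orbitSize_eq_sum_card_lt_orbitSize :
    ∑ φ : X → X, orbitSize φ x =
      ∑ m ∈ range (Fintype.card X), #{φ : X → X | m < orbitSize φ x} := by
  have hcount (φ : X → X) :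
      orbitSize φ x = #{m ∈ range (Fintype.card X) | m < orbitSize φ x} := by
    have hle := orbitSize_le_card (f := φ) (x := x)
    refine (card_range _).symm.trans (congrArg card ?_)
    ext m
    simp only [mem_range, mem_filter]
    omega
  rw [sum_congr rfl fun φ _ => hcount φ]
  simp only [card_filter]
  exact sum_comm

end Counting

section TailBound

variable {n : ℕ}

theorem one_sub_div_mem_Icc {t : ℕ} (ht : t ≤ n) : (1 - (t : ℝ) / n) ∈ Set.Icc 0 1 := by
  constructor
  · rw [sub_nonneg]
    exact div_le_one_of_le₀ (by exact_mod_cast ht) n.cast_nonneg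
  · rw [sub_le_self_iff]
    positivity

theorem prod_Icc_one_sub_div_le_one {m : ℕ} (hm : m ≤ n) :
    ∏ t ∈ Icc 1 m, (1 - (t : ℝ) / n) ≤ 1 :=
  prod_le_one (fun _ ht => (one_sub_div_mem_Icc ((mem_Icc.mp ht).2.trans hm)).1)
    fun _ ht => (one_sub_div_mem_Icc ((mem_Icc.mp ht).2.trans hm)).2

theorem prod_Icc_one_sub_div_le_pow {k m : ℕ} (hkm : k ≤ m) (hm : m ≤ n) :
    ∏ t ∈ Icc 1 m, (1 - (t : ℝ) / n) ≤ (1 - (k : ℝ) / n) ^ (m - k) := by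
  have hIcc (j : ℕ) : Icc 1 j = Ioc 0 j := Icc_succ_left_eq_Ioc 0 j
  rw [hIcc, ← prod_Ioc_consecutive _ k.zero_le hkm, ← hIcc]
  have hmem {t : ℕ} (ht : t ∈ Ioc k m) : (1 - (t : ℝ) / n) ∈ Set.Icc 0 1 :=
    one_sub_div_mem_Icc ((mem_Ioc.mp ht).2.trans hm)
  calc (∏ t ∈ Icc 1 k, (1 - (t : ℝ) / n)) * ∏ t ∈ Ioc k m, (1 - (t : ℝ) / n)
      ≤ ∏ t ∈ Ioc k m, (1 - (t : ℝ) / n) :=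
        mul_le_of_le_one_left (prod_nonneg fun _ ht => (hmem ht).1)
          (prod_Icc_one_sub_div_le_one (hkm.trans hm))
    _ ≤ ∏ _t ∈ Ioc k m, (1 - (k : ℝ) / n) := by
        refine prod_le_prod (fun _ ht => (hmem ht).1) fun t ht => ?_
        gcongr
        exact (mem_Ioc.mp ht).1.le
    _ = (1 - (k : ℝ) / n) ^ (m - k) := by rw [prod_const, Nat.card_Ioc]

theorem sum_range_prod_one_sub_div_le (n : ℕ) :
    ∑ m ∈ range n, ∏ t ∈ Icc 1 m, (1 - (t : ℝ) / n) ≤ 2 * √n + 1 := by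
  rcases n.eq_zero_or_pos with rfl | hn
  · simp
  set k := ⌈√(n : ℝ)⌉₊
  have hn' : (0 : ℝ) < n := by exact_mod_cast hn
  have hk_ge : √(n : ℝ) ≤ k := Nat.le_ceil _
  have hk_lt : (k : ℝ) < √n + 1 := Nat.ceil_lt_add_one (Real.sqrt_nonneg _)
  have hk_pos : (0 : ℝ) < k := (Real.sqrt_pos.mpr hn').trans_le hk_ge
  have hkn : k ≤ n :=
    Nat.ceil_le.mpr (Real.sqrt_le_self_iff.mpr (Or.inr (by exact_mod_cast hn)))
  set r := 1 - (k : ℝ) / n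
  have hr : r ∈ Set.Icc 0 1 := one_sub_div_mem_Icc hkn
  have hr_lt : r < 1 := sub_lt_self 1 (by positivity)
  have head : ∑ m ∈ range k, ∏ t ∈ Icc 1 m, (1 - (t : ℝ) / n) ≤ k := by
    calc _ ≤ ∑ _m ∈ range k, (1 : ℝ) :=
          sum_le_sum fun m hm => prod_Icc_one_sub_div_le_one ((mem_range.mp hm).le.trans hkn)
      _ = k := by simp
  have tail : ∑ m ∈ Ico k n, ∏ t ∈ Icc 1 m, (1 - (t : ℝ) / n) ≤ √n :=
    calc _ ≤ ∑ m ∈ Ico k n, r ^ (m - k) :=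
          sum_le_sum fun m hm =>
            prod_Icc_one_sub_div_le_pow (mem_Ico.mp hm).1 (mem_Ico.mp hm).2.le
      _ = ∑ j ∈ Ico 0 (n - k), r ^ j := by simp [sum_Ico_eq_sum_range]
      _ ≤ r ^ 0 / (1 - r) := geom_sum_Ico_le_of_lt_one hr.1 hr_lt
      _ = n / k := by simp [r]
      _ ≤ √n := by
          rw [div_le_iff₀ hk_pos]
          calc (n : ℝ) = √n * √n := (Real.mul_self_sqrt n.cast_nonneg).symm
            _ ≤ √n * k := by gcongr
  calc ∑ m ∈ range n, ∏ t ∈ Icc 1 m, (1 - (t : ℝ) / n)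
      = ∑ m ∈ range k, ∏ t ∈ Icc 1 m, (1 - (t : ℝ) / n)
        + ∑ m ∈ Ico k n, ∏ t ∈ Icc 1 m, (1 - (t : ℝ) / n) :=
        (sum_range_add_sum_Ico _ hkn).symm
    _ ≤ 2 * √n + 1 := by linarith

end TailBound

theorem stmt_12_general {X : Type*} [Fintype X] [DecidableEq X] (x : X) (n : ℕ)
    (hn : Fintype.card X = n) :
    (∑ φ : X → X, (Set.ncard {y : X | ∃ m : ℕ, φ^[m] x = y} : ℝ))
        / Fintype.card (X → X) ≤ 2 * Real.sqrt n + 1 := by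
  subst hn
  calc (∑ φ : X → X, (orbitSize φ x : ℝ)) / Fintype.card (X → X)
      = ∑ m ∈ range (Fintype.card X),
          (#{φ : X → X | m < orbitSize φ x} : ℝ) / Fintype.card (X → X) := by
        rw [← sum_div]
        exact_mod_cast congrArg (fun k : ℕ => (k : ℝ) / Fintype.card (X → X))
          (sum_orbitSize_eq_sum_card_lt_orbitSize x)
    _ = ∑ m ∈ range (Fintype.card X), ∏ t ∈ Icc 1 m, (1 - (t : ℝ) / Fintype.card X) :=
        sum_congr rfl fun m hm => card_lt_orbitSize_div_card_eq_prod x (mem_range.mp hm).le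
    _ ≤ 2 * √(Fintype.card X) + 1 := sum_range_prod_one_sub_div_le _

/-- Birthday bound for Pollard-ρ: for a uniformly random function `φ` on a set of size
`n`, the expected number of elements of the orbit of a fixed starting point `x` is at
most `2√n + 1`. -/
theorem stmt_12 {X : Type*} [Fintype X] [DecidableEq X] (x : X) (n : ℕ)
    (hn : Fintype.card X = n) (hn0 : 0 < n) :
    (∑ φ : X → X, (Set.ncard {y : X | ∃ m : ℕ, φ^[m] x = y} : ℝ))
        / Fintype.card (X → X) ≤ 2 * Real.sqrt n + 1 :=
  stmt_12_general x n hn
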